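/- arXiv:2603.19848 — 2 statements merged into one kernel-verified Lean document; each statement's English description precedes it below -/
import Mathlib

section
/- Let v₁, v₂, v₃, v₄ be points in the Euclidean plane with dist v₁ v₂ = dist v₂ v₃ = dist v₁ v₃ = dist v₃ v₄ = dist v₄ v₁ = 1 and v₂ ≠ v₄ (so v₁v₂v₃ and v₁v₃v₄ are two unit equilateral triangles glued along v₁v₃, forming a rhombus v₁v₂v₃v₄). Then every point P in the open segment between v₄ and v₁ (i.e., P = v₁ + t·(v₄ − v₁) with 0 < t < 1) satisfies dist v₂ P > 1. -/
open scoped RealInnerProductSpace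
open FiniteDimensional Module

private lemma inner_eq_neg_half {a b c : EuclideanSpace ℝ (Fin 2)}
    (ha : ‖a‖ = 1) (hb : ‖b‖ = 1) (hc : ‖c‖ = 1)
    (hac : ⟪a, c⟫ = 1/2) (hbc : ⟪b, c⟫ = 1/2) (hab : a ≠ b) :
    ⟪a, b⟫ = -(1/2) := by
  have hcc : ⟪c, c⟫ = 1 := by
    rw [real_inner_self_eq_norm_sq, hc]; norm_num
  have haa : ⟪a, a⟫ = 1 := by
    rw [real_inner_self_eq_norm_sq, ha]; norm_num
  have hbb : ⟪b, b⟫ = 1 := by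
    rw [real_inner_self_eq_norm_sq, hb]; norm_num
  have hca : ⟪c, a⟫ = 1/2 := by rw [real_inner_comm]; exact hac
  have hcb : ⟪c, b⟫ = 1/2 := by rw [real_inner_comm]; exact hbc
  have hca' : ⟪c, a - (1/2 : ℝ) • c⟫ = 0 := by
    rw [inner_sub_right, real_inner_smul_right, hcc, hca]; ring
  have hcb' : ⟪c, b - (1/2 : ℝ) • c⟫ = 0 := by
    rw [inner_sub_right, real_inner_smul_right, hcc, hcb]; ring
  have hcne : c ≠ 0 := by
    intro h; rw [h, norm_zero] at hc; norm_num at hc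
  haveI : Fact (finrank ℝ (EuclideanSpace ℝ (Fin 2)) = 1 + 1) := ⟨by simp⟩
  have hdim : finrank ℝ ((ℝ ∙ c)ᗮ : Submodule ℝ (EuclideanSpace ℝ (Fin 2))) = 1 :=
    Submodule.finrank_orthogonal_span_singleton hcne
  have hma : a - (1/2 : ℝ) • c ∈ (ℝ ∙ c)ᗮ :=
    Submodule.mem_orthogonal_singleton_iff_inner_right.2 hca'
  have hmb : b - (1/2 : ℝ) • c ∈ (ℝ ∙ c)ᗮ :=
    Submodule.mem_orthogonal_singleton_iff_inner_right.2 hcb'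
  obtain ⟨v, hv⟩ := finrank_le_one_iff.mp (le_of_eq hdim)
  obtain ⟨r, hr⟩ := hv ⟨a - (1/2 : ℝ) • c, hma⟩
  obtain ⟨s, hs⟩ := hv ⟨b - (1/2 : ℝ) • c, hmb⟩
  have hra : a - (1/2 : ℝ) • c = r • (v : EuclideanSpace ℝ (Fin 2)) := by
    have := congrArg (Subtype.val) hr; simpa using this.symm
  have hsb : b - (1/2 : ℝ) • c = s • (v : EuclideanSpace ℝ (Fin 2)) := by
    have := congrArg (Subtype.val) hs; simpa using this.symm
  have haa' : ⟪a - (1/2 : ℝ) • c, a - (1/2 : ℝ) • c⟫ = 3/4 := by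
    rw [inner_sub_left, inner_sub_right, inner_sub_right,
      real_inner_smul_left, real_inner_smul_left, real_inner_smul_right,
      real_inner_smul_right, haa, hcc, hca, hac]
    ring
  have hbb' : ⟪b - (1/2 : ℝ) • c, b - (1/2 : ℝ) • c⟫ = 3/4 := by
    rw [inner_sub_left, inner_sub_right, inner_sub_right,
      real_inner_smul_left, real_inner_smul_left, real_inner_smul_right,
      real_inner_smul_right, hbb, hcc, hcb, hbc]
    ring
  have hab' : ⟪a - (1/2 : ℝ) • c, b - (1/2 : ℝ) • c⟫ = ⟪a, b⟫ - 1/4 := by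
    rw [inner_sub_left, inner_sub_right, inner_sub_right,
      real_inner_smul_left, real_inner_smul_left, real_inner_smul_right,
      real_inner_smul_right, hcc, hcb, hac]
    ring
  set V : ℝ := ⟪(v : EuclideanSpace ℝ (Fin 2)), (v : EuclideanSpace ℝ (Fin 2))⟫ with hVdef
  have h1 : ⟪a - (1/2 : ℝ) • c, b - (1/2 : ℝ) • c⟫ = r * s * V := by
    rw [hra, hsb, real_inner_smul_left, real_inner_smul_right]; ring
  have h2 : (3:ℝ)/4 = r^2 * V := by
    rw [← haa', hra, real_inner_smul_left, real_inner_smul_right]; ring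
  have h3 : (3:ℝ)/4 = s^2 * V := by
    rw [← hbb', hsb, real_inner_smul_left, real_inner_smul_right]; ring
  have hsq : (⟪a, b⟫ - 1/4)^2 = (3/4 : ℝ)^2 := by
    rw [← hab', h1]
    have h4 : ((3:ℝ)/4)^2 = (r^2 * V) * (s^2 * V) := by rw [← h2, ← h3]; norm_num
    rw [h4]; ring
  have hfac : (⟪a, b⟫ - 1) * (⟪a, b⟫ + 1/2) = 0 := by linear_combination hsq
  rcases mul_eq_zero.mp hfac with h | h
  · exfalso
    have hinner : ⟪a, b⟫ = 1 := by linarith [sub_eq_zero.mp h]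
    have hz : ‖a - b‖^2 = 0 := by
      have hexp := real_inner_self_eq_norm_sq (a - b)
      rw [inner_sub_left, inner_sub_right, inner_sub_right, haa, hbb] at hexp
      have hcomm := real_inner_comm b a
      linarith [hexp, hcomm, hinner]
    have := pow_eq_zero_iff (n := 2) (by norm_num) |>.mp hz
    exact hab (sub_eq_zero.mp (by rwa [norm_eq_zero] at this))
  · linarith [h]

private lemma main_vec {a b c : EuclideanSpace ℝ (Fin 2)}
    (ha : ‖a‖ = 1) (hb : ‖b‖ = 1) (hc : ‖c‖ = 1)
    (hac1 : ‖a - c‖ = 1) (hbc1 : ‖b - c‖ = 1) (hab : a ≠ b)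
    {t : ℝ} (ht0 : 0 < t) : ‖a - t • b‖ > 1 := by
  have haa : ⟪a, a⟫ = 1 := by rw [real_inner_self_eq_norm_sq, ha]; norm_num
  have hbb : ⟪b, b⟫ = 1 := by rw [real_inner_self_eq_norm_sq, hb]; norm_num
  have hcc : ⟪c, c⟫ = 1 := by rw [real_inner_self_eq_norm_sq, hc]; norm_num
  have hac : ⟪a, c⟫ = 1/2 := by
    have h := real_inner_self_eq_norm_sq (a - c)
    rw [hac1, inner_sub_left, inner_sub_right, inner_sub_right, haa, hcc] at h
    linarith [h, real_inner_comm a c]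
  have hbc : ⟪b, c⟫ = 1/2 := by
    have h := real_inner_self_eq_norm_sq (b - c)
    rw [hbc1, inner_sub_left, inner_sub_right, inner_sub_right, hbb, hcc] at h
    linarith [h, real_inner_comm b c]
  have hinner : ⟪a, b⟫ = -(1/2) := inner_eq_neg_half ha hb hc hac hbc hab
  have hba : ⟪b, a⟫ = -(1/2) := by rw [real_inner_comm]; exact hinner
  have hsq : ‖a - t • b‖^2 = 1 + t + t^2 := by
    have hexp := real_inner_self_eq_norm_sq (a - t • b)
    rw [inner_sub_left, inner_sub_right, inner_sub_right,
      real_inner_smul_left, real_inner_smul_left, real_inner_smul_right,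
      real_inner_smul_right, haa, hbb, hinner, hba] at hexp
    nlinarith [hexp]
  nlinarith [norm_nonneg (a - t • b), hsq]

/-- If `v₁v₂v₃` and `v₁v₃v₄` are two unit equilateral triangles glued
along `v₁v₃` (with `v₂ ≠ v₄`, forming a unit rhombus `v₁v₂v₃v₄`), then every point `P`
in the open segment between `v₄` and `v₁` satisfies `dist v₂ P > 1`. -/
theorem rhombus_far_vertex (v₁ v₂ v₃ v₄ : EuclideanSpace ℝ (Fin 2))
    (h12 : dist v₁ v₂ = 1) (h23 : dist v₂ v₃ = 1) (h13 : dist v₁ v₃ = 1)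
    (h34 : dist v₃ v₄ = 1) (h41 : dist v₄ v₁ = 1) (h24 : v₂ ≠ v₄) :
    ∀ t : ℝ, 0 < t → t < 1 → dist v₂ (v₁ + t • (v₄ - v₁)) > 1 := by
  intro t ht0 ht1
  have ha : ‖v₂ - v₁‖ = 1 := by rw [← dist_eq_norm, dist_comm]; exact h12
  have hb : ‖v₄ - v₁‖ = 1 := by rw [← dist_eq_norm]; exact h41
  have hc : ‖v₃ - v₁‖ = 1 := by rw [← dist_eq_norm, dist_comm]; exact h13
  have hac1 : ‖(v₂ - v₁) - (v₃ - v₁)‖ = 1 := by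
    rw [sub_sub_sub_cancel_right, ← dist_eq_norm]; exact h23
  have hbc1 : ‖(v₄ - v₁) - (v₃ - v₁)‖ = 1 := by
    rw [sub_sub_sub_cancel_right, ← dist_eq_norm, dist_comm]; exact h34
  have hab : (v₂ - v₁) ≠ (v₄ - v₁) := fun h => h24 (sub_left_injective h)
  have hdist : dist v₂ (v₁ + t • (v₄ - v₁)) = ‖(v₂ - v₁) - t • (v₄ - v₁)‖ := by
    rw [dist_eq_norm]
    congr 1
    abel
  rw [hdist]
  exact main_vec ha hb hc hac1 hbc1 hab ht0
end

section
/- Let v₁, v₂, v₄ be points in the Euclidean plane with dist v₁ v₂ = 1 and dist v₁ v₄ = 1, and let v₃ = v₂ + v₄ − v₁ (so v₁v₂v₃v₄ is a rhombus with all four sides of length 1). Then it is not the case that both v₂ and v₃ lie at distance strictly less than 1 from the closed segment [v₁, v₄]; i.e., ¬(infDist v₂ (segment ℝ v₁ v₄) < 1 ∧ infDist v₃ (segment ℝ v₁ v₄) < 1). -/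
/-- In a unit rhombus `v₁v₂v₃v₄` (with `v₃ = v₂ + v₄ − v₁` and
`dist v₁ v₂ = dist v₁ v₄ = 1`), it is not the case that both `v₂` and `v₃` lie at distance
strictly less than `1` from the closed segment `[v₁, v₄]`. -/
theorem rhombus_not_both_close (v₁ v₂ v₄ : EuclideanSpace ℝ (Fin 2))
    (h12 : dist v₁ v₂ = 1) (h14 : dist v₁ v₄ = 1) :
    ¬ (Metric.infDist v₂ (segment ℝ v₁ v₄) < 1 ∧
       Metric.infDist (v₂ + v₄ - v₁) (segment ℝ v₁ v₄) < 1) := by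
  rintro ⟨h2, h3⟩
  have hne : (segment ℝ v₁ v₄).Nonempty := ⟨v₁, left_mem_segment ℝ v₁ v₄⟩
  obtain ⟨y, hy, hy1⟩ := (Metric.infDist_lt_iff hne).1 h2
  obtain ⟨z, hz, hz1⟩ := (Metric.infDist_lt_iff hne).1 h3
  rw [segment_eq_image'] at hy hz
  obtain ⟨t, ⟨ht0, ht1⟩, rfl⟩ := hy
  obtain ⟨r, ⟨hr0, hr1⟩, rfl⟩ := hz
  set u := v₂ - v₁ with hu
  set w := v₄ - v₁ with hw
  set s : ℝ := inner ℝ u w with hs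
  have hun : ‖u‖ = 1 := by rw [hu, ← dist_eq_norm, dist_comm]; exact h12
  have hwn : ‖w‖ = 1 := by rw [hw, ← dist_eq_norm, dist_comm]; exact h14
  set q : ℝ := 1 - r with hq
  have hq0 : 0 ≤ q := by linarith
  have e1 : dist v₂ (v₁ + t • w) ^ 2 = 1 - 2 * t * s + t ^ 2 := by
    rw [dist_eq_norm]
    have h : v₂ - (v₁ + t • w) = u - t • w := by rw [hu]; abel
    rw [h, norm_sub_sq_real, real_inner_smul_right, norm_smul, hun, hwn, ← hs]
    simp [Real.norm_eq_abs, mul_pow, sq_abs]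
    ring
  have e2 : dist (v₂ + v₄ - v₁) (v₁ + r • w) ^ 2 = 1 + 2 * q * s + q ^ 2 := by
    rw [dist_eq_norm]
    have h : v₂ + v₄ - v₁ - (v₁ + r • w) = u + q • w := by
      rw [hu, hw, hq]; module
    rw [h, norm_add_sq_real, real_inner_smul_right, norm_smul, hun, hwn, ← hs]
    simp [Real.norm_eq_abs, mul_pow, sq_abs]
    ring
  have d1 : dist v₂ (v₁ + t • w) ^ 2 < 1 := by
    nlinarith [dist_nonneg (x := v₂) (y := v₁ + t • w)]
  have d2 : dist (v₂ + v₄ - v₁) (v₁ + r • w) ^ 2 < 1 := by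
    nlinarith [dist_nonneg (x := v₂ + v₄ - v₁) (y := v₁ + r • w)]
  rw [e1] at d1
  rw [e2] at d2
  have ht : 0 < t := ht0.lt_of_ne (by intro h; rw [← h] at d1; norm_num at d1)
  have hqp : 0 < q := hq0.lt_of_ne (by intro h; rw [← h] at d2; norm_num at d2)
  have hsp : 0 < s := by nlinarith
  nlinarith
end
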